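/- For all integers n ≥ 0 and 0 ≤ m ≤ n, the number of noncrossing contractions with exactly m edges of the word (a a†)^n equals the number of 2-Motzkin paths of length n in which the total number of up steps U plus black level steps L equals m. -/

import Mathlib

/-- Two edges `(i,j)` and `(p,q)` cross if `i < p < j < q` or `p < i < q < j`. -/
def Crosses {N : ℕ} (e f : Fin N × Fin N) : Prop :=
  (e.1 < f.1 ∧ f.1 < e.2 ∧ e.2 < f.2) ∨ (f.1 < e.1 ∧ e.1 < f.2 ∧ f.2 < e.2)

/-- A contraction of the word `w`: a set of edges `(i,j)` with `i < j`, `w i = false` (an `a`),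
`w j = true` (an `a†`), whose endpoints are pairwise distinct. -/
def IsContraction {N : ℕ} (w : Fin N → Bool) (E : Finset (Fin N × Fin N)) : Prop :=
  (∀ e ∈ E, e.1 < e.2 ∧ w e.1 = false ∧ w e.2 = true) ∧
  (∀ e ∈ E, ∀ f ∈ E, e ≠ f → e.1 ≠ f.1 ∧ e.1 ≠ f.2 ∧ e.2 ≠ f.1 ∧ e.2 ≠ f.2)

/-- A set of edges is noncrossing if no two of its edges cross. -/
def IsNoncrossing {N : ℕ} (E : Finset (Fin N × Fin N)) : Prop :=
  ∀ e ∈ E, ∀ f ∈ E, ¬ Crosses e f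

/-- The number of noncrossing contractions of `w` with exactly `m` edges. -/
noncomputable def ncCount {N : ℕ} (w : Fin N → Bool) (m : ℕ) : ℕ :=
  Nat.card {E : Finset (Fin N × Fin N) //
    IsContraction w E ∧ IsNoncrossing E ∧ E.card = m}

/-- The word `(a^r a†)^n`, of length `(r+1)n`: `n` blocks, each consisting of `r` copies of `a`
(`false`) followed by one `a†` (`true`). -/
def wordRA (r n : ℕ) : Fin ((r + 1) * n) → Bool := fun i => decide (i.val % (r + 1) = r)

/-- Steps of a 2-Motzkin path: up, down, black level, gray level. -/
inductive MStep : Type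
  | U : MStep
  | D : MStep
  | Lb : MStep
  | Lg : MStep
deriving DecidableEq

/-- Height change of a step: `U` is `+1`, `D` is `-1`, level steps are `0`. -/
def MStep.h : MStep → ℤ
  | .U => 1
  | .D => -1
  | .Lb => 0
  | .Lg => 0

/-- A 2-Motzkin path: every partial height is nonnegative and the final height is `0`. -/
def IsMotzkin2 (p : List MStep) : Prop :=
  (∀ q : List MStep, q <+: p → 0 ≤ (q.map MStep.h).sum) ∧ (p.map MStep.h).sum = 0

/-!
Read the blocks of `(a a†)^n` from left to right and let block `k` of a contraction `E` give the
step `Lb`, `U`, `D` or `Lg` according as both of its letters, only its `a`, only its `a†`, or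
neither are contracted. The height before block `k` is the number of edges passing over it, so this
is a 2-Motzkin path, and `#U + #Lb` counts the `a`-endpoints, that is, the edges. If `E` is
noncrossing, its edges between different blocks `i < j` are exactly the matched pairs of the path:
after step `j` the path returns for the first time to its height before step `i`. So `E` is
recovered by joining matched `U … D` pairs and the `Lb` blocks, and this construction inverts the
map on all 2-Motzkin paths.
-/

open Finset

namespace MStep

lemma h_le_one (s : MStep) : s.h ≤ 1 := by cases s <;> decide

lemma neg_one_le_h (s : MStep) : -1 ≤ s.h := by cases s <;> decide

end MStep

lemma List.count_ofFn {α : Type*} [DecidableEq α] {n : ℕ} (f : Fin n → α) (a : α) :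
    (List.ofFn f).count a = #{i | f i = a} := by
  rw [← Multiset.coe_count, ← Fin.univ_val_map, Multiset.count_map]
  simp [Finset.card, Finset.filter_val, eq_comm]

lemma Finset.card_filter_eq_ite_of_injOn {α β : Type*} [DecidableEq β] {s : Finset α}
    {g : α → β} (hg : Set.InjOn g s) (b : β) :
    #(s.filter fun a => g a = b) = if ∃ a ∈ s, g a = b then 1 else 0 := by
  split_ifs with h
  · obtain ⟨a, ha, rfl⟩ := h
    rw [card_eq_one]
    refine ⟨a, eq_singleton_iff_unique_mem.mpr ⟨mem_filter.mpr ⟨ha, rfl⟩, ?_⟩⟩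
    exact fun x hx => hg (mem_filter.mp hx).1 ha (mem_filter.mp hx).2
  · rw [card_eq_zero, filter_eq_empty_iff]
    exact fun a ha hab => h ⟨a, ha, hab⟩

namespace MotzkinPath

variable {p : List MStep} {i i' j j' k : ℕ}

/-- Positions past the end read as gray level steps, which do not move the height. -/
def stepAt (p : List MStep) (k : ℕ) : MStep := p.getD k .Lg

def height (p : List MStep) (k : ℕ) : ℤ := ((p.take k).map MStep.h).sum

lemma height_succ (p : List MStep) (k : ℕ) : height p (k + 1) = height p k + (stepAt p k).h := by
  unfold height stepAt
  rw [List.take_add_one, List.getD_eq_getElem?_getD]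
  cases p[k]? <;> simp [MStep.h]

lemma height_succ_le (p : List MStep) (k : ℕ) : height p (k + 1) ≤ height p k + 1 := by
  rw [height_succ]
  linarith [(stepAt p k).h_le_one]

lemma height_sub_one_le (p : List MStep) (k : ℕ) : height p k - 1 ≤ height p (k + 1) := by
  rw [height_succ]
  linarith [(stepAt p k).neg_one_le_h]

lemma lt_length_of_stepAt_ne_Lg (h : stepAt p k ≠ .Lg) : k < p.length := by
  by_contra hk
  exact h (List.getD_eq_default _ _ (by omega))

lemma _root_.IsMotzkin2.height_nonneg (hp : IsMotzkin2 p) (k : ℕ) : 0 ≤ height p k :=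
  hp.1 _ (List.take_prefix _ _)

lemma _root_.IsMotzkin2.height_length (hp : IsMotzkin2 p) : height p p.length = 0 := by
  simpa [height] using hp.2

def IsMatch (p : List MStep) (i j : ℕ) : Prop :=
  i < j ∧ height p (j + 1) = height p i ∧ ∀ k, i < k → k ≤ j → height p i < height p k

lemma IsMatch.stepAt_left (h : IsMatch p i j) : stepAt p i = .U := by
  have hup := h.2.2 (i + 1) (by omega) h.1
  rw [height_succ] at hup
  have : 0 < (stepAt p i).h := by omega
  cases hs : stepAt p i <;> simp_all [MStep.h]

lemma IsMatch.stepAt_right (h : IsMatch p i j) : stepAt p j = .D := by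
  have hdown := h.2.2 j h.1 le_rfl
  have hret := h.2.1
  rw [height_succ] at hret
  have : (stepAt p j).h < 0 := by omega
  cases hs : stepAt p j <;> simp_all [MStep.h]

lemma IsMatch.right_unique (h : IsMatch p i j) (h' : IsMatch p i j') : j = j' := by
  have := h.1
  have := h'.1
  have := h.2.1
  have := h'.2.1
  by_contra hne
  rcases Nat.lt_or_gt_of_ne hne with hlt | hlt
  · have := h'.2.2 (j + 1) (by omega) hlt
    omega
  · have := h.2.2 (j' + 1) (by omega) hlt
    omega

lemma IsMatch.left_unique (h : IsMatch p i j) (h' : IsMatch p i' j) : i = i' := by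
  have := h.2.1
  have := h'.2.1
  by_contra hne
  rcases Nat.lt_or_gt_of_ne hne with hlt | hlt
  · have := h.2.2 i' hlt h'.1.le
    omega
  · have := h'.2.2 i hlt h.1.le
    omega

lemma IsMatch.not_interleave (h : IsMatch p i j) (h' : IsMatch p i' j') (hi : i < i')
    (hi' : i' ≤ j) (hj : j < j') : False := by
  have := h.2.2 i' hi hi'
  have := h'.2.2 (j + 1) (by omega) hj
  have := h.2.1
  omega

lemma exists_isMatch_of_stepAt_eq_U (hp : IsMotzkin2 p) (hU : stepAt p i = .U) :
    ∃ j, IsMatch p i j := by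
  have hi : i < p.length := lt_length_of_stepAt_ne_Lg (by simp [hU])
  have hup : height p (i + 1) = height p i + 1 := by rw [height_succ, hU]; rfl
  -- the first return to the height before step `i`; it exists since the path ends at height `0`
  have hret : ∃ r, i < r ∧ height p r ≤ height p i :=
    ⟨p.length, hi, hp.height_length ▸ hp.height_nonneg i⟩
  obtain ⟨hir, hr⟩ := Nat.find_spec hret
  have hmin : ∀ k, i < k → k < Nat.find hret → height p i < height p k := fun k hik hk =>
    lt_of_not_ge fun hle => Nat.find_min hret hk ⟨hik, hle⟩
  have hr2 : i + 1 < Nat.find hret := by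
    by_contra hle
    have : Nat.find hret = i + 1 := by omega
    rw [this] at hr
    omega
  refine ⟨Nat.find hret - 1, by omega, ?_, fun k hik hk => hmin k hik (by omega)⟩
  have hprev := hmin (Nat.find hret - 1) (by omega) (by omega)
  have hstep := height_sub_one_le p (Nat.find hret - 1)
  rw [Nat.sub_add_cancel (by omega)] at hstep ⊢
  omega

lemma exists_isMatch_of_stepAt_eq_D (hp : IsMotzkin2 p) (hD : stepAt p j = .D) :
    ∃ i, IsMatch p i j := by
  have hj : j < p.length := lt_length_of_stepAt_ne_Lg (by simp [hD])
  have hdown : height p (j + 1) = height p j - 1 := by rw [height_succ, hD]; rfl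
  -- the last time before step `j` that the path is at most at the height reached after it
  have h0 : height p 0 ≤ height p (j + 1) := hp.height_nonneg (j + 1)
  set i := Nat.findGreatest (fun k => height p k ≤ height p (j + 1)) j
  have hi : height p i ≤ height p (j + 1) :=
    Nat.findGreatest_spec (P := fun k => height p k ≤ height p (j + 1)) (Nat.zero_le j) h0
  have habove : ∀ k, i < k → k ≤ j → height p (j + 1) < height p k := fun k hik hkj =>
    lt_of_not_ge (Nat.findGreatest_is_greatest hik hkj)
  have hij : i < j := lt_of_le_of_ne (Nat.findGreatest_le j) fun h => by rw [h] at hi; omega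
  have := habove (i + 1) (by omega) hij
  have := height_succ_le p i
  exact ⟨i, hij, by omega, fun k hik hkj => by have := habove k hik hkj; omega⟩

def Linked (p : List MStep) (i j : ℕ) : Prop :=
  IsMatch p i j ∨ (i = j ∧ stepAt p i = .Lb)

lemma Linked.le (h : Linked p i j) : i ≤ j := by
  rcases h with h | ⟨rfl, -⟩
  exacts [h.1.le, le_rfl]

lemma Linked.lt_length (h : Linked p i j) : j < p.length := by
  rcases h with h | ⟨rfl, h⟩
  · exact lt_length_of_stepAt_ne_Lg (by simp [h.stepAt_right])
  · exact lt_length_of_stepAt_ne_Lg (by simp [h])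

lemma Linked.right_unique (h : Linked p i j) (h' : Linked p i j') : j = j' := by
  rcases h with h | ⟨rfl, hLb⟩ <;> rcases h' with h' | ⟨rfl, hLb'⟩
  · exact h.right_unique h'
  · simp [h.stepAt_left] at hLb'
  · simp [h'.stepAt_left] at hLb
  · rfl

lemma Linked.left_unique (h : Linked p i j) (h' : Linked p i' j) : i = i' := by
  rcases h with h | ⟨rfl, hLb⟩ <;> rcases h' with h' | ⟨rfl, hLb'⟩
  · exact h.left_unique h'
  · simp [h.stepAt_right] at hLb'
  · simp [h'.stepAt_right] at hLb
  · rfl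

lemma Linked.not_interleave (h : Linked p i j) (h' : Linked p i' j') (hi : i < i')
    (hi' : i' ≤ j) (hj : j < j') : False := by
  rcases h with h | ⟨rfl, -⟩
  · rcases h' with h' | ⟨rfl, -⟩
    exacts [h.not_interleave h' hi hi' hj, by omega]
  · omega

lemma exists_linked_right_iff (hp : IsMotzkin2 p) :
    (∃ j, Linked p i j) ↔ stepAt p i = .U ∨ stepAt p i = .Lb := by
  constructor
  · rintro ⟨j, h | ⟨-, h⟩⟩
    exacts [Or.inl h.stepAt_left, Or.inr h]
  · rintro (h | h)
    · obtain ⟨j, hj⟩ := exists_isMatch_of_stepAt_eq_U hp h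
      exact ⟨j, Or.inl hj⟩
    · exact ⟨i, Or.inr ⟨rfl, h⟩⟩

lemma exists_linked_left_iff (hp : IsMotzkin2 p) :
    (∃ i, Linked p i j) ↔ stepAt p j = .D ∨ stepAt p j = .Lb := by
  constructor
  · rintro ⟨i, h | ⟨rfl, h⟩⟩
    exacts [Or.inl h.stepAt_right, Or.inr h]
  · rintro (h | h)
    · obtain ⟨i, hi⟩ := exists_isMatch_of_stepAt_eq_D hp h
      exact ⟨i, Or.inl hi⟩
    · exact ⟨j, Or.inr ⟨rfl, h⟩⟩

end MotzkinPath

namespace IsContraction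

variable {N : ℕ} {w : Fin N → Bool} {E : Finset (Fin N × Fin N)} {e f : Fin N × Fin N}

lemma fst_lt_snd (hC : IsContraction w E) (he : e ∈ E) : e.1 < e.2 := (hC.1 e he).1

lemma eq_of_fst_eq (hC : IsContraction w E) (he : e ∈ E) (hf : f ∈ E) (h : e.1 = f.1) :
    e = f :=
  by_contra fun hne => (hC.2 e he f hf hne).1 h

lemma eq_of_snd_eq (hC : IsContraction w E) (he : e ∈ E) (hf : f ∈ E) (h : e.2 = f.2) :
    e = f :=
  by_contra fun hne => (hC.2 e he f hf hne).2.2.2 h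

lemma snd_lt_snd_of_nested (hC : IsContraction w E) (hN : IsNoncrossing E) (he : e ∈ E)
    (hf : f ∈ E) (h₁ : f.1 < e.1) (h₂ : e.1 < f.2) : e.2 < f.2 := by
  have hne : f ≠ e := fun h => h₁.ne (by rw [h])
  refine lt_of_le_of_ne (le_of_not_gt fun hlt => hN f hf e he (Or.inl ⟨h₁, h₂, hlt⟩)) ?_
  exact fun h => hne (hC.eq_of_snd_eq hf he h.symm)

lemma eq_of_snd_eq_fst_add_one (hC : IsContraction w E) (hN : IsNoncrossing E) (he : e ∈ E)
    (hf : f ∈ E) (h : f.2.val = e.1.val + 1) : e = f := by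
  by_contra hne
  have hfe : f.1.val < e.1.val := by
    have := Fin.lt_def.mp (hC.fst_lt_snd hf)
    have := Fin.val_ne_of_ne (hC.2 e he f hf hne).1
    omega
  have := Fin.lt_def.mp (hC.snd_lt_snd_of_nested hN he hf hfe (by rw [Fin.lt_def]; omega))
  have := Fin.lt_def.mp (hC.fst_lt_snd he)
  omega

end IsContraction

section EdgesOver

variable {N : ℕ} {w : Fin N → Bool} {E : Finset (Fin N × Fin N)} {e : Fin N × Fin N}

def edgesOver (E : Finset (Fin N × Fin N)) (x : ℕ) : Finset (Fin N × Fin N) :=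
  E.filter fun e => e.1.val < x ∧ x < e.2.val

/-- Both sides count the edges `e` with `e.1 ≤ x < e.2`. -/
lemma card_edgesOver_succ_add (hC : IsContraction w E) (x : ℕ) :
    #(edgesOver E (x + 1)) + #(E.filter fun e => e.2.val = x + 1) =
      #(edgesOver E x) + #(E.filter fun e => e.1.val = x) := by
  simp only [edgesOver, card_filter, ← sum_add_distrib]
  refine sum_congr rfl fun e he => ?_
  have := Fin.lt_def.mp (hC.fst_lt_snd he)
  split_ifs <;> omega

lemma edgesOver_snd_eq_edgesOver_fst (hC : IsContraction w E) (hN : IsNoncrossing E)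
    (he : e ∈ E) : edgesOver E e.2 = edgesOver E e.1 := by
  have hlt := Fin.lt_def.mp (hC.fst_lt_snd he)
  ext f
  simp only [edgesOver, mem_filter, and_congr_right_iff]
  intro hf
  constructor
  · rintro ⟨h₁, h₂⟩
    have hne : f.1.val ≠ e.1.val := fun h => by
      rw [hC.eq_of_fst_eq hf he (Fin.ext h)] at h₂
      omega
    have : ¬ e.1.val < f.1.val := fun h =>
      (Fin.lt_def.mp (hC.snd_lt_snd_of_nested hN hf he h (by rw [Fin.lt_def]; omega))).not_gt h₂
    omega
  · rintro ⟨h₁, h₂⟩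
    have := Fin.lt_def.mp (hC.snd_lt_snd_of_nested hN he hf h₁ h₂)
    omega

lemma card_edgesOver_fst_lt (hC : IsContraction w E) (hN : IsNoncrossing E) (he : e ∈ E)
    {x : ℕ} (h₁ : e.1.val < x) (h₂ : x < e.2.val) :
    #(edgesOver E e.1) < #(edgesOver E x) := by
  refine card_lt_card ((ssubset_insert (a := e) fun h => ?_).trans_subset (insert_subset ?_ ?_))
  · exact (mem_filter.mp h).2.1.false
  · exact mem_filter.mpr ⟨he, h₁, h₂⟩
  · intro f hf
    obtain ⟨hf, hf₁, hf₂⟩ := mem_filter.mp hf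
    have := Fin.lt_def.mp (hC.snd_lt_snd_of_nested hN he hf hf₁ hf₂)
    exact mem_filter.mpr ⟨hf, by omega, by omega⟩

end EdgesOver

section BlockWord

variable {n : ℕ} {E : Finset (Fin ((1 + 1) * n) × Fin ((1 + 1) * n))}
  {e : Fin ((1 + 1) * n) × Fin ((1 + 1) * n)} {p : List MStep} {i j k : ℕ}

open MotzkinPath

lemma IsContraction.parity (hC : IsContraction (wordRA 1 n) E) (he : e ∈ E) :
    e.1.val % 2 = 0 ∧ e.2.val % 2 = 1 := by
  obtain ⟨-, h₁, h₂⟩ := hC.1 e he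
  simp only [wordRA, decide_eq_false_iff_not, decide_eq_true_eq] at h₁ h₂
  omega

/-- The `a` of block `k` is contracted. -/
abbrev OpensAt (E : Finset (Fin ((1 + 1) * n) × Fin ((1 + 1) * n))) (k : ℕ) : Prop :=
  ∃ e ∈ E, e.1.val = 2 * k

/-- The `a†` of block `k` is contracted. -/
abbrev ClosesAt (E : Finset (Fin ((1 + 1) * n) × Fin ((1 + 1) * n))) (k : ℕ) : Prop :=
  ∃ e ∈ E, e.2.val = 2 * k + 1

def blockStep (E : Finset (Fin ((1 + 1) * n) × Fin ((1 + 1) * n))) (k : ℕ) : MStep :=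
  if OpensAt E k then (if ClosesAt E k then .Lb else .U) else (if ClosesAt E k then .D else .Lg)

def blockPath (E : Finset (Fin ((1 + 1) * n) × Fin ((1 + 1) * n))) : List MStep :=
  List.ofFn fun k : Fin n => blockStep E k

lemma blockStep_eq_U_iff : blockStep E k = .U ↔ OpensAt E k ∧ ¬ ClosesAt E k := by
  unfold blockStep
  split_ifs with hO hCl hCl <;> simp only [hO, hCl] <;> decide

lemma blockStep_eq_Lb_iff : blockStep E k = .Lb ↔ OpensAt E k ∧ ClosesAt E k := by
  unfold blockStep
  split_ifs with hO hCl hCl <;> simp only [hO, hCl] <;> decide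

lemma length_blockPath : (blockPath E).length = n := List.length_ofFn

lemma stepAt_blockPath (hk : k < n) : stepAt (blockPath E) k = blockStep E k := by
  simp [stepAt, blockPath, List.getD_eq_getElem?_getD, hk]

lemma card_edgesOver_odd_succ (hC : IsContraction (wordRA 1 n) E) {x : ℕ} (hx : x % 2 = 1) :
    #(edgesOver E (x + 1)) = #(edgesOver E x) := by
  have hcount := card_edgesOver_succ_add hC x
  have hsnd : E.filter (fun e => e.2.val = x + 1) = ∅ :=
    filter_eq_empty_iff.mpr fun e he h => by have := (hC.parity he).2; omega
  have hfst : E.filter (fun e => e.1.val = x) = ∅ :=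
    filter_eq_empty_iff.mpr fun e he h => by have := (hC.parity he).1; omega
  simpa [hsnd, hfst] using hcount

lemma card_edgesOver_two_mul_succ (hC : IsContraction (wordRA 1 n) E) (k : ℕ) :
    (#(edgesOver E (2 * (k + 1))) : ℤ) = #(edgesOver E (2 * k)) + (blockStep E k).h := by
  have hcount := card_edgesOver_succ_add hC (2 * k)
  have hopen : #(E.filter fun e => e.1.val = 2 * k) = if OpensAt E k then 1 else 0 :=
    card_filter_eq_ite_of_injOn (fun e he f hf h => hC.eq_of_fst_eq he hf (Fin.ext h)) _
  have hclose : #(E.filter fun e => e.2.val = 2 * k + 1) = if ClosesAt E k then 1 else 0 :=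
    card_filter_eq_ite_of_injOn (fun e he f hf h => hC.eq_of_snd_eq he hf (Fin.ext h)) _
  rw [show 2 * (k + 1) = 2 * k + 1 + 1 by ring, card_edgesOver_odd_succ hC (by omega)]
  unfold blockStep
  split_ifs at hopen hclose ⊢ <;> simp only [MStep.h] <;> omega

lemma height_blockPath (hC : IsContraction (wordRA 1 n) E) (hk : k ≤ n) :
    height (blockPath E) k = #(edgesOver E (2 * k)) := by
  induction k with
  | zero => simp [height, edgesOver]
  | succ k ih =>
    rw [height_succ, ih (by omega), stepAt_blockPath (by omega), card_edgesOver_two_mul_succ hC]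

lemma blockPath_isMotzkin2 (hC : IsContraction (wordRA 1 n) E) : IsMotzkin2 (blockPath E) := by
  refine ⟨fun q hq => ?_, ?_⟩
  · have hle : q.length ≤ n := length_blockPath (E := E) ▸ hq.length_le
    have : (q.map MStep.h).sum = height (blockPath E) q.length := by
      rw [height, ← List.prefix_iff_eq_take.mp hq]
    rw [this, height_blockPath hC hle]
    exact Nat.cast_nonneg _
  · have hempty : edgesOver E (2 * n) = ∅ :=
      filter_eq_empty_iff.mpr fun e _ h => by have := e.2.isLt; omega
    have := height_blockPath hC (le_refl n)
    rwa [hempty, card_empty, Nat.cast_zero, height,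
      List.take_of_length_le length_blockPath.le] at this

lemma card_eq_card_opensAt (hC : IsContraction (wordRA 1 n) E) :
    #E = #{k : Fin n | OpensAt E k} := by
  refine card_bij (fun e he => ⟨e.1.val / 2, ?_⟩) (fun e he => ?_) (fun e he f hf h => ?_) ?_
  · have := e.1.isLt
    omega
  · have := (hC.parity he).1
    exact mem_filter.mpr ⟨mem_univ _, e, he, by dsimp only; omega⟩
  · have := (hC.parity he).1
    have := (hC.parity hf).1
    have := Fin.mk.inj_iff.mp h
    exact hC.eq_of_fst_eq he hf (Fin.ext (by omega))
  · intro k hk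
    obtain ⟨e, he, h⟩ := (mem_filter.mp hk).2
    exact ⟨e, he, Fin.ext (by dsimp only; omega)⟩

lemma count_U_add_count_Lb_blockPath (hC : IsContraction (wordRA 1 n) E) :
    (blockPath E).count .U + (blockPath E).count .Lb = #E := by
  rw [blockPath, List.count_ofFn, List.count_ofFn, ← card_union_of_disjoint, ← filter_or,
    card_eq_card_opensAt hC]
  · congr 1
    ext k
    simp only [mem_filter, mem_univ, true_and, blockStep_eq_U_iff, blockStep_eq_Lb_iff]
    by_cases hCl : ClosesAt E k <;> simp [hCl]
  · exact disjoint_filter.mpr fun k _ h => by simp [h]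

lemma isMatch_blockPath (hC : IsContraction (wordRA 1 n) E) (hN : IsNoncrossing E) (he : e ∈ E)
    (h : e.1.val / 2 < e.2.val / 2) : IsMatch (blockPath E) (e.1.val / 2) (e.2.val / 2) := by
  obtain ⟨h₁, h₂⟩ := hC.parity he
  have := e.2.isLt
  refine ⟨h, ?_, fun k hik hkj => ?_⟩
  · rw [height_blockPath hC (by omega), height_blockPath hC (by omega),
      show 2 * (e.2.val / 2 + 1) = e.2.val + 1 by omega, show 2 * (e.1.val / 2) = e.1.val by omega,
      card_edgesOver_odd_succ hC h₂, edgesOver_snd_eq_edgesOver_fst hC hN he]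
  · rw [height_blockPath hC (by omega), height_blockPath hC (by omega),
      show 2 * (e.1.val / 2) = e.1.val by omega]
    exact_mod_cast card_edgesOver_fst_lt hC hN he (by omega) (by omega)

lemma linked_blockPath_iff (hC : IsContraction (wordRA 1 n) E) (hN : IsNoncrossing E) :
    Linked (blockPath E) i j ↔ ∃ e ∈ E, e.1.val = 2 * i ∧ e.2.val = 2 * j + 1 := by
  constructor
  · rintro (h | ⟨rfl, h⟩)
    · have hi : i < n := length_blockPath (E := E) ▸ (h.1.trans (Linked.lt_length (.inl h)))
      have hU := h.stepAt_left
      rw [stepAt_blockPath hi, blockStep_eq_U_iff] at hU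
      obtain ⟨⟨f, hf, hf₁⟩, hnot⟩ := hU
      have := (hC.parity hf).2
      have hfi : f.2.val / 2 ≠ i := fun hfi => hnot ⟨f, hf, by omega⟩
      have hf₂ : i < f.2.val / 2 := by have := Fin.lt_def.mp (hC.fst_lt_snd hf); omega
      have hmatch := isMatch_blockPath hC hN hf (by omega)
      rw [show f.1.val / 2 = i by omega] at hmatch
      exact ⟨f, hf, hf₁, by rw [h.right_unique hmatch]; omega⟩
    · have hi : i < n := length_blockPath (E := E) ▸ Linked.lt_length (.inr ⟨rfl, h⟩)
      rw [stepAt_blockPath hi, blockStep_eq_Lb_iff] at h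
      obtain ⟨⟨f, hf, hf₁⟩, ⟨g, hg, hg₂⟩⟩ := h
      obtain rfl := hC.eq_of_snd_eq_fst_add_one hN hf hg (by omega)
      exact ⟨f, hf, hf₁, hg₂⟩
  · rintro ⟨e, he, h₁, h₂⟩
    have hlt := Fin.lt_def.mp (hC.fst_lt_snd he)
    rcases eq_or_lt_of_le (show i ≤ j by omega) with rfl | hij
    · refine .inr ⟨rfl, ?_⟩
      rw [stepAt_blockPath (by have := e.2.isLt; omega), blockStep_eq_Lb_iff]
      exact ⟨⟨e, he, h₁⟩, ⟨e, he, h₂⟩⟩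
    · have hmatch := isMatch_blockPath hC hN he (by omega)
      rw [show e.1.val / 2 = i by omega, show e.2.val / 2 = j by omega] at hmatch
      exact .inl hmatch

open Classical in
noncomputable def ofPath (n : ℕ) (p : List MStep) :
    Finset (Fin ((1 + 1) * n) × Fin ((1 + 1) * n)) :=
  univ.filter fun e => e.1.val % 2 = 0 ∧ e.2.val % 2 = 1 ∧ Linked p (e.1.val / 2) (e.2.val / 2)

lemma mem_ofPath :
    e ∈ ofPath n p ↔ e.1.val % 2 = 0 ∧ e.2.val % 2 = 1 ∧ Linked p (e.1.val / 2) (e.2.val / 2) := by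
  simp [ofPath]

lemma mk_mem_ofPath (hl : p.length = n) (h : Linked p i j) :
    ((⟨2 * i, by have := h.le; have := h.lt_length; omega⟩,
      ⟨2 * j + 1, by have := h.lt_length; omega⟩) : Fin ((1 + 1) * n) × Fin ((1 + 1) * n)) ∈
      ofPath n p := by
  refine mem_ofPath.mpr ⟨by simp, by simp [Nat.add_mod], ?_⟩
  simpa [show (2 * j + 1) / 2 = j by omega] using h

lemma ofPath_isContraction : IsContraction (wordRA 1 n) (ofPath n p) := by
  refine ⟨fun e he => ?_, fun e he f hf hne => ?_⟩
  · obtain ⟨h₁, h₂, h⟩ := mem_ofPath.mp he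
    have := h.le
    refine ⟨Fin.lt_def.mpr (by omega), ?_, ?_⟩ <;> simp [wordRA] <;> omega
  · obtain ⟨e₁, e₂, he⟩ := mem_ofPath.mp he
    obtain ⟨f₁, f₂, hf⟩ := mem_ofPath.mp hf
    refine ⟨fun h => hne ?_, fun h => ?_, fun h => ?_, fun h => hne ?_⟩
    · rw [h] at he
      have := he.right_unique hf
      exact Prod.ext h (Fin.ext (by omega))
    · have := congrArg Fin.val h
      omega
    · have := congrArg Fin.val h
      omega
    · rw [h] at he
      have := he.left_unique hf
      exact Prod.ext (Fin.ext (by omega)) h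

lemma ofPath_noncrossing : IsNoncrossing (ofPath n p) := by
  suffices ∀ e ∈ ofPath n p, ∀ f ∈ ofPath n p, ¬ (e.1 < f.1 ∧ f.1 < e.2 ∧ e.2 < f.2) from
    fun e he f hf h => h.elim (this e he f hf) (this f hf e he)
  rintro e he f hf ⟨h₁, h₂, h₃⟩
  obtain ⟨e₁, e₂, he⟩ := mem_ofPath.mp he
  obtain ⟨f₁, f₂, hf⟩ := mem_ofPath.mp hf
  rw [Fin.lt_def] at h₁ h₂ h₃
  exact he.not_interleave hf (by omega) (by omega) (by omega)

lemma opensAt_ofPath_iff (hl : p.length = n) : OpensAt (ofPath n p) k ↔ ∃ j, Linked p k j := by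
  constructor
  · rintro ⟨e, he, h⟩
    obtain ⟨-, -, hL⟩ := mem_ofPath.mp he
    exact ⟨_, by rwa [show e.1.val / 2 = k by omega] at hL⟩
  · rintro ⟨j, h⟩
    exact ⟨_, mk_mem_ofPath hl h, rfl⟩

lemma closesAt_ofPath_iff (hl : p.length = n) : ClosesAt (ofPath n p) k ↔ ∃ i, Linked p i k := by
  constructor
  · rintro ⟨e, he, h⟩
    obtain ⟨-, -, hL⟩ := mem_ofPath.mp he
    exact ⟨_, by rwa [show e.2.val / 2 = k by omega] at hL⟩
  · rintro ⟨i, h⟩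
    exact ⟨_, mk_mem_ofPath hl h, rfl⟩

lemma blockStep_ofPath (hp : IsMotzkin2 p) (hl : p.length = n) :
    blockStep (ofPath n p) k = stepAt p k := by
  unfold blockStep
  simp only [opensAt_ofPath_iff hl, closesAt_ofPath_iff hl, exists_linked_right_iff hp,
    exists_linked_left_iff hp]
  cases stepAt p k <;> simp

lemma blockPath_ofPath (hp : IsMotzkin2 p) (hl : p.length = n) : blockPath (ofPath n p) = p :=
  List.ext_getElem (by rw [length_blockPath, hl]) fun k _ hk => by
    simp only [blockPath, List.getElem_ofFn]
    rw [blockStep_ofPath hp hl, stepAt, List.getD_eq_getElem _ _ hk]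

lemma ofPath_blockPath (hC : IsContraction (wordRA 1 n) E) (hN : IsNoncrossing E) :
    ofPath n (blockPath E) = E := by
  ext e
  rw [mem_ofPath, linked_blockPath_iff hC hN]
  constructor
  · rintro ⟨h₁, h₂, f, hf, hf₁, hf₂⟩
    rwa [show e = f from Prod.ext (Fin.ext (by omega)) (Fin.ext (by omega))]
  · intro he
    obtain ⟨h₁, h₂⟩ := hC.parity he
    exact ⟨h₁, h₂, e, he, by omega, by omega⟩

end BlockWord

noncomputable def noncrossingContractionEquiv (n m : ℕ) :
    {E : Finset (Fin ((1 + 1) * n) × Fin ((1 + 1) * n)) //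
      IsContraction (wordRA 1 n) E ∧ IsNoncrossing E ∧ E.card = m} ≃
    {p : List MStep // p.length = n ∧ IsMotzkin2 p ∧ p.count MStep.U + p.count MStep.Lb = m} where
  toFun E := ⟨blockPath E.1, length_blockPath, blockPath_isMotzkin2 E.2.1,
    (count_U_add_count_Lb_blockPath E.2.1).trans E.2.2.2⟩
  invFun p := ⟨ofPath n p.1, ofPath_isContraction, ofPath_noncrossing, by
    rw [← count_U_add_count_Lb_blockPath ofPath_isContraction, blockPath_ofPath p.2.2.1 p.2.1,
      p.2.2.2]⟩
  left_inv E := Subtype.ext (ofPath_blockPath E.2.1 E.2.2.1)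
  right_inv p := Subtype.ext (blockPath_ofPath p.2.2.1 p.2.1)

theorem stmt14_general (n m : ℕ) :
    ncCount (wordRA 1 n) m
      = Nat.card {p : List MStep // p.length = n ∧ IsMotzkin2 p ∧
          p.count MStep.U + p.count MStep.Lb = m} :=
  Nat.card_congr (noncrossingContractionEquiv n m)

theorem stmt14 (n m : ℕ) (hm : m ≤ n) :
    ncCount (wordRA 1 n) m
      = Nat.card {p : List MStep // p.length = n ∧ IsMotzkin2 p ∧
          p.count MStep.U + p.count MStep.Lb = m} :=
  stmt14_general n m
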